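/- Let p be an odd prime, Ψ_∞/Ψ a totally ramified ℤ_p-extension of an unramified extension Ψ of ℚ_p, R_n the ring of integers of the n-th layer Ψ_n, π_{n+1} a uniformizer of R_{n+1}, and f(x) = Σ_{i=0}^p a_i x^i ∈ R_n[x] a monic Eisenstein polynomial of degree p with f(π_{n+1}) = 0. Then f'(x) ∈ p·R_{n+1}[x] (equivalently, p divides a_i for all 1 ≤ i ≤ p−1) if and only if the different 𝔇_{Ψ_{n+1}/Ψ_n} is contained in p·R_{n+1}. -/

import Mathlib

noncomputable section

open scoped Classical

/-- An additive `ℚ ∪ {∞}`-valued valuation on a field `A`, normalized by `v p = 1`.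
This models the `p`-adic valuation `v_p` on (an algebraic closure of) `ℚ_p`,
with the convention `v 0 = ∞`. -/
structure PadicValData (A : Type) [Field A] (p : ℕ) : Type where
  v : A → WithTop ℚ
  v_top_iff : ∀ x : A, v x = ⊤ ↔ x = 0
  v_mul : ∀ x y : A, v (x * y) = v x + v y
  v_min_le_add : ∀ x y : A, min (v x) (v y) ≤ v (x + y)
  v_coe_p : v (p : A) = 1

variable {p : ℕ} {A : Type} [Field A]

/-- `x ∈ F` is a uniformizer of the `p`-adic field `F` (embedded in `A` by `emb`):
its valuation is minimal among the positive valuations of elements of `F`. -/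
def IsUniformizer (vd : PadicValData A p) {F : Type} [Field F] (emb : F →+* A) (x : F) : Prop :=
  x ≠ 0 ∧ 0 < vd.v (emb x) ∧
    ∀ y : F, 0 < vd.v (emb y) → vd.v (emb x) ≤ vd.v (emb y)

/-- `y` belongs to the `j`-th power `m_F^j` of the maximal ideal of the ring of integers
`O_F` of `F` (embedded in `A` by `emb`): `y` is a multiple, by an element of `O_F`, of a
product of `j` elements of the maximal ideal `m_F`.  (For `j = 0` this says `y ∈ O_F`.) -/
def InMaxIdealPow (vd : PadicValData A p) {F : Type} [Field F] (emb : F →+* A) (j : ℕ)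
    (y : A) : Prop :=
  ∃ (u : F) (s : Fin j → F), 0 ≤ vd.v (emb u) ∧ (∀ k, 0 < vd.v (emb (s k))) ∧
    y = emb u * ∏ k, emb (s k)

/-- The lower-numbering ramification set
`G_i = {σ ∈ Gal(L/K) | ∀ x ∈ O_L, σ x - x ∈ m_L^{i+1}}` (with `G_i = G` for `i ≤ -1`). -/
def lowerRamSet (vd : PadicValData A p) (K L : Type) [Field K] [Field L] [Algebra K L]
    (emb : L →+* A) (i : ℤ) : Set (L ≃ₐ[K] L) :=
  {σ | ∀ x : L, 0 ≤ vd.v (emb x) →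
    InMaxIdealPow vd emb (i + 1).toNat (emb (σ x) - emb x)}

/-- The Herbrand function `φ_{L/K}(u) = ∫_0^u dt / (G_0 : G_t)`, where `G_t = G_{⌈t⌉}`. -/
noncomputable def herbrandPhi (vd : PadicValData A p) (K L : Type) [Field K] [Field L]
    [Algebra K L] (emb : L →+* A) (u : ℝ) : ℝ :=
  ∫ t in (0:ℝ)..u,
    (Nat.card ↥(lowerRamSet vd K L emb ⌈t⌉) : ℝ) /
      (Nat.card ↥(lowerRamSet vd K L emb 0) : ℝ)

/-- The Herbrand function `ψ_{L/K}`, the inverse of `φ_{L/K}`. -/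
noncomputable def herbrandPsi (vd : PadicValData A p) (K L : Type) [Field K] [Field L]
    [Algebra K L] (emb : L →+* A) (w : ℝ) : ℝ :=
  Function.invFun (herbrandPhi vd K L emb) w

/-- The upper-numbering ramification set `G^i = G_{ψ_{L/K}(i)}` of `Gal(L/K)`. -/
def upperRamSet (vd : PadicValData A p) (K L : Type) [Field K] [Field L] [Algebra K L]
    (emb : L →+* A) (i : ℤ) : Set (L ≃ₐ[K] L) :=
  lowerRamSet vd K L emb ⌈herbrandPsi vd K L emb (i : ℝ)⌉

/-- Condition (ram): the upper ramification groups of `L/K` satisfy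
`G = G^{-1} = G^0 ⊇ G^1 ⊋ G^2 ⊋ ⋯ ⊋ G^n ⊋ G^{n+1} = {1}`, with `G^i/G^{i+1}` of order `p`
for `1 ≤ i ≤ n` and `G^0/G^1` of order `p - 1`. -/
def RamCond (vd : PadicValData A p) (K L : Type) [Field K] [Field L] [Algebra K L]
    (emb : L →+* A) (n : ℕ) : Prop :=
  upperRamSet vd K L emb (-1) = Set.univ ∧
  upperRamSet vd K L emb 0 = Set.univ ∧
  (∀ i : ℤ, upperRamSet vd K L emb (i + 1) ⊆ upperRamSet vd K L emb i) ∧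
  Nat.card ↥(upperRamSet vd K L emb 0)
    = (p - 1) * Nat.card ↥(upperRamSet vd K L emb 1) ∧
  (∀ i : ℕ, 1 ≤ i → i ≤ n →
    Nat.card ↥(upperRamSet vd K L emb (i : ℤ))
      = p * Nat.card ↥(upperRamSet vd K L emb ((i : ℤ) + 1))) ∧
  upperRamSet vd K L emb ((n : ℤ) + 1) = {1}

/-- The local resolvent `⟨α|χ⟩ = ∑_{γ ∈ Gal(L/K)} χ(γ) γ(α)`, computed in `A`. -/
noncomputable def localResolvent (K L : Type) [Field K] [Field L] [Algebra K L]
    (emb : L →+* A) (χ : (L ≃ₐ[K] L) → A) (α : L) : A :=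
  ∑ᶠ γ : L ≃ₐ[K] L, χ γ * emb (γ α)


/-- `layer` is the tower of layers of a totally ramified `ℤ_p`-extension `Ψ_∞/Ψ`:
`layer n = Ψ_n` is the `n`-th layer, i.e. the unique subextension with
`Gal(Ψ_n/Ψ) ≅ ℤ/p^n`; each layer is Galois and cyclic of degree `p^n` over `Ψ`,
the layers are increasing with union `Ψ_∞`, and each `Ψ_n/Ψ` is totally ramified
(witnessed by a uniformizer of `Ψ_n` of valuation `p^{-n}`, `Ψ` being unramified
over `ℚ_p`). -/
def IsZpExtensionTower (vd : PadicValData A p) (Ψ Ψinf : Type) [Field Ψ] [Field Ψinf]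
    [Algebra Ψ Ψinf] (emb : Ψinf →+* A)
    (layer : ℕ → IntermediateField Ψ Ψinf) : Prop :=
  layer 0 = ⊥ ∧
  (∀ n, layer n ≤ layer (n + 1)) ∧
  (⨆ n, layer n) = ⊤ ∧
  (∀ n, IsGalois Ψ ↥(layer n)) ∧
  (∀ n, IsCyclic (↥(layer n) ≃ₐ[Ψ] ↥(layer n))) ∧
  (∀ n, Nat.card (↥(layer n) ≃ₐ[Ψ] ↥(layer n)) = p ^ n) ∧
  (∀ n, ∃ x : ↥(layer n),
    IsUniformizer vd (emb.comp ((layer n).val : ↥(layer n) →+* Ψinf)) x ∧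
    vd.v ((emb.comp ((layer n).val : ↥(layer n) →+* Ψinf)) x)
      = ((((p : ℚ) ^ n)⁻¹ : ℚ) : WithTop ℚ))

end

/-! Write `π = π_{n+1}`, so `v π = p^{-(n+1)}`, while the positive values of `v` on `Ψ_n` are
at least `p^{-n} = p · v π`. Hence for `c_i ∈ Ψ_n` the terms `c_i π^i`, `0 ≤ i < p`, have
pairwise distinct valuations, and `v (∑ c_i π^i) ≥ v p` holds iff `v (c_i) + i · v π ≥ v p`
for every `i`, i.e. (by the same gap) iff `v (c_i) ≥ v p`. Applied to
`f'(π) = ∑_{i<p} (i + 1) a_{i+1} π^i`, where `i + 1` is a unit for `i + 1 < p` and the last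
coefficient is `p a_p`, this says exactly that `p ∣ a_i` for `1 ≤ i ≤ p - 1`. -/

open Polynomial

namespace AddValuation

section General

variable {R Γ : Type*} [Ring R] [LinearOrderedAddCommGroupWithTop Γ] (w : AddValuation R Γ)

lemma map_natCast_nonneg (k : ℕ) : 0 ≤ w (k : R) := by
  induction k with
  | zero => simp
  | succ k ih => exact le_trans (le_min ih w.map_one.ge) (by push_cast; exact w.map_add _ _)

lemma map_intCast_nonneg (k : ℤ) : 0 ≤ w (k : R) := by
  obtain ⟨k, rfl | rfl⟩ := k.eq_nat_or_neg
  · exact_mod_cast w.map_natCast_nonneg k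
  · simpa using w.map_natCast_nonneg k

lemma map_natCast_eq_zero_of_not_dvd {p i : ℕ} (hp : p.Prime) (hwp : 0 < w (p : R))
    (hi : ¬ p ∣ i) : w (i : R) = 0 := by
  obtain ⟨u, t, hut⟩ : IsCoprime (i : ℤ) (p : ℤ) :=
    Int.isCoprime_iff_gcd_eq_one.2 (by simpa [Int.gcd, Nat.coprime_comm] using
      (Nat.Coprime.symm ((Nat.Prime.coprime_iff_not_dvd hp).2 hi)))
  have hsum : (u : R) * i + t * p = 1 := by exact_mod_cast congrArg (Int.cast (R := R)) hut
  refine le_antisymm ?_ (w.map_natCast_nonneg i)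
  by_contra! hi0
  have hmin := w.map_add ((u : R) * i) (t * p)
  rw [hsum, map_one, w.map_mul, w.map_mul] at hmin
  exact (lt_min (lt_add_of_nonneg_of_lt (w.map_intCast_nonneg u) hi0)
    (lt_add_of_nonneg_of_lt (w.map_intCast_nonneg t) hwp)).not_ge hmin

lemma le_of_le_sum_of_pairwise_ne {ι : Type*} {s : Finset ι} {f : ι → R} {g : Γ}
    (hf : ∀ i ∈ s, ∀ j ∈ s, i ≠ j → w (f i) ≠ ⊤ → w (f i) ≠ w (f j))
    (hg : g ≤ w (∑ i ∈ s, f i)) : ∀ i ∈ s, g ≤ w (f i) := by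
  classical
  by_contra! hcon
  obtain ⟨i₁, hi₁, hlt⟩ := hcon
  obtain ⟨i₀, hi₀, hmin⟩ := s.exists_min_image (fun i => w (f i)) ⟨i₁, hi₁⟩
  have hi₀lt : w (f i₀) < g := (hmin i₁ hi₁).trans_lt hlt
  have hi₀top : w (f i₀) ≠ ⊤ := (hi₀lt.trans_le le_top).ne
  have hrest : w (f i₀) < w (∑ i ∈ s.erase i₀, f i) :=
    w.map_lt_sum hi₀top fun j hj =>
      (hmin j (s.mem_of_mem_erase hj)).lt_of_ne (hf i₀ hi₀ j (s.mem_of_mem_erase hj)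
        (s.ne_of_mem_erase hj).symm hi₀top)
  rw [← s.add_sum_erase f hi₀, w.map_add_eq_of_lt_left hrest] at hg
  exact hg.not_gt hi₀lt

end General

section Field

variable {A K Γ : Type*} [Field A] [Field K] [LinearOrderedAddCommGroupWithTop Γ]
  (w : AddValuation A Γ) (e : K →+* A)

lemma map_eq_map_div_add {a b : K} (hb : b ≠ 0) : w (e a) = w (e (a / b)) + w (e b) := by
  rw [← w.map_mul, ← e.map_mul, div_mul_cancel₀ a hb]

lemma le_of_lt_add_of_forall_pos_le {x a b : K} (hx : ∀ y : K, 0 < w (e y) → w (e x) ≤ w (e y))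
    (h : w (e b) < w (e a) + w (e x)) : w (e b) ≤ w (e a) := by
  rcases eq_or_ne a 0 with rfl | ha
  · simp
  rw [w.map_eq_map_div_add e ha] at h ⊢
  have hq : ¬ 0 < w (e (b / a)) := fun hpos =>
    (h.trans_le (by rw [add_comm]; gcongr; exact hx _ hpos)).false
  calc w (e (b / a)) + w (e a) ≤ 0 + w (e a) := by gcongr; exact not_lt.1 hq
    _ = w (e a) := zero_add _

lemma exists_eq_mul_iff_le {a b : K} (hb : b ≠ 0) :
    (∃ r : K, 0 ≤ w (e r) ∧ a = b * r) ↔ w (e b) ≤ w (e a) := by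
  constructor
  · rintro ⟨r, hr, rfl⟩
    rw [e.map_mul, w.map_mul]
    exact le_add_of_nonneg_right hr
  · intro h
    refine ⟨a / b, ?_, (mul_div_cancel₀ a hb).symm⟩
    have hbtop : w (e b) ≠ ⊤ := w.ne_top_iff.2 (by simpa using hb)
    rw [w.map_eq_map_div_add e hb (a := a)] at h
    exact (add_le_add_iff_left_of_ne_top hbtop).1 (by rwa [zero_add])

lemma le_map_coeff_derivative_iff {p : ℕ} (hp : p.Prime) (hwp : 0 < w (p : A)) {f : K[X]}
    (hfp : 0 ≤ w (e (f.coeff p))) :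
    (∀ i, 1 ≤ i → i ≤ p - 1 → w (e p) ≤ w (e (f.coeff i))) ↔
      ∀ i < p, w (e p) ≤ w (e ((derivative f).coeff i)) := by
  have hcoeff : ∀ i,
      w (e ((derivative f).coeff i)) = w (e (f.coeff (i + 1))) + w ((i + 1 : ℕ) : A) := by
    intro i
    rw [coeff_derivative, e.map_mul, w.map_mul]
    push_cast
    rw [e.map_add, map_natCast, e.map_one]
  have hunit : ∀ i, 1 ≤ i → i ≤ p - 1 → w (i : A) = 0 := fun i h1 h2 =>
    w.map_natCast_eq_zero_of_not_dvd hp hwp (Nat.not_dvd_of_pos_of_lt h1 (by omega))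
  simp only [map_natCast, hcoeff]
  constructor
  · intro h i hi
    rcases Nat.lt_or_ge (i + 1) p with hlt | hge
    · rw [hunit (i + 1) (by omega) (by omega), add_zero]
      exact h (i + 1) (by omega) (by omega)
    · obtain rfl : i + 1 = p := by omega
      exact le_add_of_nonneg_left hfp
  · intro h i h1 h2
    have := h (i - 1) (by omega)
    rwa [Nat.sub_add_cancel h1, hunit i h1 h2, add_zero] at this

end Field

section RationalValues

variable {A K : Type*} [Field A] [Field K] (w : AddValuation A (WithTop ℚ)) (e : K →+* A)
  {x : K} {y : A} {m : ℕ}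

lemma eq_of_map_mul_pow_eq (hx : ∀ y : K, 0 < w (e y) → w (e x) ≤ w (e y)) (hy : 0 < w y)
    (hytop : w y ≠ ⊤) (hm : m • w y ≤ w (e x)) {c d : K} {i j : ℕ} (hi : i < m) (hj : j < m)
    (htop : w (e c * y ^ i) ≠ ⊤) (h : w (e c * y ^ i) = w (e d * y ^ j)) : i = j := by
  wlog hij : i ≤ j generalizing c d i j
  · exact (this hj hi (h ▸ htop) h.symm (le_of_not_ge hij)).symm
  by_contra hne
  obtain ⟨k, rfl⟩ := Nat.exists_eq_add_of_le hij
  have hk : 0 < k := Nat.pos_of_ne_zero (by rintro rfl; simp at hne)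
  simp only [w.map_mul, w.map_pow] at h htop
  lift w y to ℚ using hytop with qy
  lift w (e c) to ℚ using (WithTop.add_ne_top.1 htop).1 with qc hqc
  lift w (e d) to ℚ using (WithTop.add_ne_top.1 (h ▸ htop)).1 with qd hqd
  have hcd : qc = qd + k * qy := by
    have : qc + i * qy = qd + (i + k : ℕ) * qy := by exact_mod_cast h
    push_cast at this
    linarith
  have hqy : (0 : ℚ) < qy := by exact_mod_cast hy
  have hlt : w (e c) < w (e d) + w (e x) := by
    rw [← hqc, ← hqd, hcd]
    calc (((qd + k * qy : ℚ)) : WithTop ℚ) < ((qd + m * qy : ℚ) : WithTop ℚ) := by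
          exact_mod_cast (by nlinarith [(by exact_mod_cast (by omega : k < m) : (k : ℚ) < m)])
      _ ≤ qd + w (e x) := by rw [WithTop.coe_add]; gcongr; exact_mod_cast hm
  have hle := w.le_of_lt_add_of_forall_pos_le e hx hlt
  rw [← hqc, ← hqd, hcd] at hle
  have : qd + k * qy ≤ qd := by exact_mod_cast hle
  nlinarith [(by exact_mod_cast hk : (0 : ℚ) < k)]

lemma le_map_coeff_of_le_map_sum (hx : ∀ y : K, 0 < w (e y) → w (e x) ≤ w (e y))
    (hy : 0 < w y) (hytop : w y ≠ ⊤) (hm : m • w y ≤ w (e x)) {c : ℕ → K} {b : K}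
    (h : w (e b) ≤ w (∑ i ∈ Finset.range m, e (c i) * y ^ i)) {i : ℕ} (hi : i < m) :
    w (e b) ≤ w (e (c i)) := by
  have hterm := w.le_of_le_sum_of_pairwise_ne (fun i hi j hj hij htop heq => hij
    (w.eq_of_map_mul_pow_eq e hx hy hytop hm (Finset.mem_range.1 hi) (Finset.mem_range.1 hj)
      htop heq)) h i (Finset.mem_range.2 hi)
  rcases eq_or_ne (c i) 0 with hci | hci
  · simp [hci]
  have hctop : w (e (c i)) ≠ ⊤ := w.ne_top_iff.2 (by simpa using hci)
  refine w.le_of_lt_add_of_forall_pos_le e hx (hterm.trans_lt ?_)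
  rw [w.map_mul, w.map_pow, WithTop.add_lt_add_iff_left hctop]
  refine lt_of_lt_of_le ?_ hm
  lift w y to ℚ using hytop with qy
  have hqy : (0 : ℚ) < qy := by exact_mod_cast hy
  exact_mod_cast nsmul_lt_nsmul_left hqy hi

lemma le_map_sum_iff (hx : ∀ y : K, 0 < w (e y) → w (e x) ≤ w (e y))
    (hy : 0 < w y) (hytop : w y ≠ ⊤) (hm : m • w y ≤ w (e x)) {c : ℕ → K} {b : K} :
    w (e b) ≤ w (∑ i ∈ Finset.range m, e (c i) * y ^ i) ↔ ∀ i < m, w (e b) ≤ w (e (c i)) := by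
  refine ⟨fun h i hi => w.le_map_coeff_of_le_map_sum e hx hy hytop hm h hi, fun h => ?_⟩
  refine w.map_le_sum fun i hi => ?_
  rw [w.map_mul, w.map_pow]
  exact le_add_of_le_of_nonneg (h i (Finset.mem_range.1 hi)) (nsmul_nonneg hy.le i)

end RationalValues

end AddValuation

namespace PadicValData

variable {p : ℕ} {A : Type} [Field A] (vd : PadicValData A p)

lemma v_one : vd.v 1 = 0 := by
  have h1 : vd.v 1 ≠ ⊤ := fun h => one_ne_zero ((vd.v_top_iff 1).1 h)
  have h := vd.v_mul 1 1
  rw [one_mul] at h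
  exact ((add_left_inj_of_ne_top h1).1 (by rwa [zero_add])).symm

def toAddValuation : AddValuation A (WithTop ℚ) :=
  AddValuation.of vd.v ((vd.v_top_iff 0).2 rfl) vd.v_one vd.v_min_le_add vd.v_mul

@[simp]
lemma toAddValuation_apply (x : A) : vd.toAddValuation x = vd.v x := rfl

end PadicValData

lemma IsUniformizer.v_eq {p : ℕ} {A F : Type} [Field A] [Field F] {vd : PadicValData A p}
    {e : F →+* A} {x y : F} (hx : IsUniformizer vd e x) (hy : IsUniformizer vd e y) :
    vd.v (e x) = vd.v (e y) :=
  le_antisymm (hx.2.2 y hy.2.1) (hy.2.2 x hx.2.1)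

lemma Polynomial.map_aeval_eq_sum_range' {K L A : Type*} [CommRing K] [CommRing L] [Semiring A]
    [Algebra K L] {eK : K →+* A} {eL : L →+* A} (hcomp : ∀ c, eL (algebraMap K L c) = eK c)
    {g : K[X]} {m : ℕ} (hg : g.natDegree < m) (π : L) :
    eL (aeval π g) = ∑ i ∈ Finset.range m, eK (g.coeff i) * eL π ^ i := by
  simp [aeval_eq_sum_range' hg, Algebra.smul_def, hcomp]

theorem statement13_general {p : ℕ} [Fact p.Prime]
    {A : Type} [Field A] (vd : PadicValData A p)
    (Ψ Ψinf : Type) [Field Ψ] [Field Ψinf]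
    [Algebra Ψ Ψinf]
    (emb : Ψinf →+* A)
    (layer : ℕ → IntermediateField Ψ Ψinf)
    (htower : IsZpExtensionTower vd Ψ Ψinf emb layer)
    (n : ℕ) (hle : layer n ≤ layer (n + 1))
    (πn1 : ↥(layer (n + 1)))
    (hπn1 : IsUniformizer vd
      (emb.comp ((layer (n + 1)).val : ↥(layer (n + 1)) →+* Ψinf)) πn1)
    (f : Polynomial ↥(layer n))
    (hdeg : f.natDegree = p)
    (hint : ∀ i : ℕ, 0 ≤ vd.v ((emb.comp ((layer n).val : ↥(layer n) →+* Ψinf)) (f.coeff i))) :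
    letI : Algebra ↥(layer n) ↥(layer (n + 1)) :=
      ((IntermediateField.inclusion hle).toRingHom).toAlgebra
    (Polynomial.aeval πn1 f = 0 →
      ((∀ i : ℕ, 1 ≤ i → i ≤ p - 1 →
          ∃ r : ↥(layer n),
            0 ≤ vd.v ((emb.comp ((layer n).val : ↥(layer n) →+* Ψinf)) r) ∧
            f.coeff i = (p : ↥(layer n)) * r)
        ↔ (∃ r : ↥(layer (n + 1)),
            0 ≤ vd.v ((emb.comp ((layer (n + 1)).val : ↥(layer (n + 1)) →+* Ψinf)) r) ∧
            Polynomial.aeval πn1 (Polynomial.derivative f)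
              = (p : ↥(layer (n + 1))) * r))) := by
  let : Algebra ↥(layer n) ↥(layer (n + 1)) :=
    ((IntermediateField.inclusion hle).toRingHom).toAlgebra
  rintro -
  have hp : p.Prime := Fact.out
  obtain ⟨-, -, -, -, -, -, huni⟩ := htower
  obtain ⟨πK, hπK, hvπK⟩ := huni n
  obtain ⟨πL, hπL, hvπL⟩ := huni (n + 1)
  set eK := emb.comp ((layer n).val : ↥(layer n) →+* Ψinf)
  set eL := emb.comp ((layer (n + 1)).val : ↥(layer (n + 1)) →+* Ψinf)
  simp only [← vd.toAddValuation_apply] at hint hvπK ⊢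
  set w := vd.toAddValuation
  have hvπ : w (eL πn1) = ((((p : ℚ) ^ (n + 1))⁻¹ : ℚ) : WithTop ℚ) := (hπn1.v_eq hπL).trans hvπL
  have hm : p • w (eL πn1) ≤ w (eK πK) := by
    have hpQ : (p : ℚ) ≠ 0 := by exact_mod_cast hp.ne_zero
    rw [hvπ, hvπK, ← WithTop.coe_nsmul, nsmul_eq_mul, pow_succ, mul_inv, mul_left_comm,
      mul_inv_cancel₀ hpQ, mul_one]
  have hwp : w (p : A) = 1 := vd.v_coe_p
  have hp0 : ∀ {F : Type} [Field F] (e : F →+* A), (p : F) ≠ 0 := fun e h =>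
    WithTop.one_ne_top (by rw [← hwp, ← map_natCast e, h, map_zero, w.map_zero])
  have hlt : (derivative f).natDegree < p :=
    hdeg ▸ natDegree_derivative_lt (hdeg ▸ hp.ne_zero)
  calc _ ↔ ∀ i, 1 ≤ i → i ≤ p - 1 → w (eK p) ≤ w (eK (f.coeff i)) := by
        simp only [w.exists_eq_mul_iff_le eK (hp0 eK)]
    _ ↔ ∀ i < p, w (eK p) ≤ w (eK ((derivative f).coeff i)) :=
        w.le_map_coeff_derivative_iff eK hp (hwp ▸ zero_lt_one) (hint p)
    _ ↔ w (eK p) ≤ w (∑ i ∈ Finset.range p, eK ((derivative f).coeff i) * eL πn1 ^ i) :=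
        (w.le_map_sum_iff eK hπK.2.2 hπn1.2.1 (by simp [hvπ]) hm).symm
    _ ↔ w (eL p) ≤ w (eL (aeval πn1 (derivative f))) := by
        rw [map_aeval_eq_sum_range' (eK := eK) (eL := eL) (fun _ => rfl) hlt, map_natCast eK,
          map_natCast eL]
    _ ↔ _ := (w.exists_eq_mul_iff_le eL (hp0 eL)).symm

/-- Lemma 3.2. Let `p` be an odd prime, `Ψ_∞/Ψ` a totally ramified
`ℤ_p`-extension of an unramified extension `Ψ` of `ℚ_p`, `R_n` the ring of integers of
the `n`-th layer `Ψ_n`, `π_{n+1}` a uniformizer of `R_{n+1}`, and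
`f(x) = ∑_{i=0}^p a_i x^i ∈ R_n[x]` a monic Eisenstein polynomial of degree `p` with
`f(π_{n+1}) = 0`.  Then `f'(x) ∈ p·R_{n+1}[x]` (equivalently, `p` divides `a_i` for all
`1 ≤ i ≤ p−1`) if and only if the different `𝔇_{Ψ_{n+1}/Ψ_n}` is contained in
`p·R_{n+1}`; here `𝔇_{Ψ_{n+1}/Ψ_n} = (f'(π_{n+1}))`, so the latter condition reads
`f'(π_{n+1}) ∈ p·R_{n+1}`. -/
theorem statement13 {p : ℕ} [Fact p.Prime] (hp : Odd p)
    {A : Type} [Field A] (vd : PadicValData A p)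
    (Ψ Ψinf : Type) [Field Ψ] [Field Ψinf]
    [Algebra ℚ_[p] Ψ] [FiniteDimensional ℚ_[p] Ψ] [Algebra Ψ Ψinf]
    (emb : Ψinf →+* A)
    (hunram : IsUniformizer vd (emb.comp (algebraMap Ψ Ψinf)) (p : Ψ))
    (layer : ℕ → IntermediateField Ψ Ψinf)
    (htower : IsZpExtensionTower vd Ψ Ψinf emb layer)
    (n : ℕ) (hle : layer n ≤ layer (n + 1))
    (πn1 : ↥(layer (n + 1)))
    (hπn1 : IsUniformizer vd
      (emb.comp ((layer (n + 1)).val : ↥(layer (n + 1)) →+* Ψinf)) πn1)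
    (f : Polynomial ↥(layer n))
    (hmonic : f.Monic) (hdeg : f.natDegree = p)
    (hint : ∀ i : ℕ, 0 ≤ vd.v ((emb.comp ((layer n).val : ↥(layer n) →+* Ψinf)) (f.coeff i)))
    (heis : ∀ i : ℕ, i < p →
      InMaxIdealPow vd (emb.comp ((layer n).val : ↥(layer n) →+* Ψinf)) 1
        ((emb.comp ((layer n).val : ↥(layer n) →+* Ψinf)) (f.coeff i)))
    (heis0 : IsUniformizer vd
      (emb.comp ((layer n).val : ↥(layer n) →+* Ψinf)) (f.coeff 0)) :
    letI : Algebra ↥(layer n) ↥(layer (n + 1)) :=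
      ((IntermediateField.inclusion hle).toRingHom).toAlgebra
    (Polynomial.aeval πn1 f = 0 →
      ((∀ i : ℕ, 1 ≤ i → i ≤ p - 1 →
          ∃ r : ↥(layer n),
            0 ≤ vd.v ((emb.comp ((layer n).val : ↥(layer n) →+* Ψinf)) r) ∧
            f.coeff i = (p : ↥(layer n)) * r)
        ↔ (∃ r : ↥(layer (n + 1)),
            0 ≤ vd.v ((emb.comp ((layer (n + 1)).val : ↥(layer (n + 1)) →+* Ψinf)) r) ∧
            Polynomial.aeval πn1 (Polynomial.derivative f)
              = (p : ↥(layer (n + 1))) * r))) :=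
  statement13_general vd Ψ Ψinf emb layer htower n hle πn1 hπn1 f hdeg hint
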